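/- arXiv:2311.18528 — 2 statements merged into one kernel-verified Lean document; each statement's English description precedes it below -/
import Mathlib

section
/- Let Y be an inhabited type and g : List Y → Y. For every n : ℕ and every list xs : List Y with n + 1 ≤ length xs, mapB (td' n) (ch (n+1) xs) = ((mapB g ∘ up)^[n]) (mapB ex (ch 1 xs)), where (·)^[n] denotes n-fold iteration of a function. -/
def subs {α : Type} : List α → List (List α)
  | [] => []
  | x :: xs => (subs xs).map (x :: ·) ++ [xs]

def choose {α : Type} : ℕ → List α → List (List α)
  | 0, _ => [[]]
  | k+1, xs =>
    if k + 1 = xs.length then [xs]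
    else
      match xs with
      | [] => []
      | x :: xs' => (choose k xs').map (x :: ·) ++ choose (k+1) xs'

inductive B (α : Type) : Type
  | T : α → B α
  | N : B α → B α → B α

def mapB {α β : Type} (f : α → β) : B α → B β
  | .T a => .T (f a)
  | .N t u => .N (mapB f t) (mapB f u)

def zipBW {α β γ : Type} (f : α → β → γ) : B α → B β → B γ
  | .T a, .T b => .T (f a b)
  | .N t u, .N t' u' => .N (zipBW f t t') (zipBW f u u')
  | .T a, v => mapB (f a) v
  | v, .T b => mapB (f · b) v

def ch {α : Type} : ℕ → List α → B (List α)
  | 0, _ => .T []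
  | k+1, xs =>
    if k + 1 = xs.length then .T xs
    else
      match xs with
      | [] => .T []
      | x :: xs' => .N (mapB (x :: ·) (ch k xs')) (ch (k+1) xs')

def snoc {α : Type} (ys : List α) (z : α) : List α := ys ++ [z]

def unT {α : Type} [Inhabited α] : B α → α
  | .T p => p
  | .N _ _ => default

def up {α : Type} : B α → B (List α)
  | .N (.T p) (.T q) => .T [p, q]
  | .N t (.T q) => .T (unT (up t) ++ [q])
  | .N (.T p) u => .N (mapB (fun q => [p, q]) u) (up u)
  | .N t u => .N (zipBW snoc (up t) u) (up u)
  | .T p => .T [p]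

def ex {α : Type} [Inhabited α] : List α → α
  | [x] => x
  | _ => default

def td {X Y : Type} [Inhabited X] [Inhabited Y] (f : X → Y) (g : List Y → Y) : ℕ → List X → Y
  | 0, xs => f (ex xs)
  | n+1, xs => g ((subs xs).map (td f g n))

def td' {Y : Type} [Inhabited Y] (g : List Y → Y) : ℕ → List Y → Y
  | 0, xs => ex xs
  | n+1, xs => g ((subs xs).map (td' g n))



def tipsP {α : Type} (P : α → Prop) : B α → Prop
  | .T a => P a
  | .N t u => tipsP P t ∧ tipsP P u

lemma tipsP_T {α : Type} (P : α → Prop) (a : α) : tipsP P (B.T a) ↔ P a := Iff.rfl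

lemma tipsP_N {α : Type} (P : α → Prop) (t u : B α) :
    tipsP P (B.N t u) ↔ tipsP P t ∧ tipsP P u := Iff.rfl

lemma mapB_mapB {α β γ : Type} (f : β → γ) (g : α → β) (t : B α) :
    mapB f (mapB g t) = mapB (fun a => f (g a)) t := by
  induction t with
  | T a => rfl
  | N t u iht ihu => simp [mapB, iht, ihu]

lemma mapB_congrP {α β : Type} {P : α → Prop} {f g : α → β} {t : B α}
    (ht : tipsP P t) (hfg : ∀ a, P a → f a = g a) : mapB f t = mapB g t := by
  induction t with
  | T a => rw [tipsP_T] at ht; simp [mapB, hfg a ht]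
  | N t u iht ihu =>
    rw [tipsP_N] at ht
    simp [mapB, iht ht.1, ihu ht.2]

lemma mapB_congr {α β : Type} {f g : α → β} (hfg : ∀ a, f a = g a) (t : B α) :
    mapB f t = mapB g t := by
  induction t with
  | T a => simp [mapB, hfg a]
  | N t u iht ihu => simp [mapB, iht, ihu]

lemma zipBW_mapB {α β γ δ : Type} (h : β → γ → δ) (f₁ : α → β) (f₂ : α → γ) (t : B α) :
    zipBW h (mapB f₁ t) (mapB f₂ t) = mapB (fun a => h (f₁ a) (f₂ a)) t := by
  induction t with
  | T a => rfl
  | N t u iht ihu => simp [mapB, zipBW, iht, ihu]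

lemma mapB_ne_T {α β : Type} {f : α → β} {t : B α} (ht : ∀ p, t ≠ B.T p) :
    ∀ q, mapB f t ≠ B.T q := by
  cases t with
  | T a => exact absurd rfl (ht a)
  | N t u => intro q hq; simp [mapB] at hq

lemma up_N_T {γ : Type} [Inhabited γ] (t : B γ) (hne : ∀ p, t ≠ B.T p) (q : γ) :
    up (B.N t (B.T q)) = B.T (unT (up t) ++ [q]) := by
  cases t with
  | T p => exact absurd rfl (hne p)
  | N a b => rfl

lemma up_T_N {γ : Type} [Inhabited γ] (p : γ) (u : B γ) (hne : ∀ q, u ≠ B.T q) :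
    up (B.N (B.T p) u) = B.N (mapB (fun q => [p, q]) u) (up u) := by
  cases u with
  | T q => exact absurd rfl (hne q)
  | N a b => rfl

lemma up_N_N {γ : Type} [Inhabited γ] (t u : B γ) (ht : ∀ p, t ≠ B.T p)
    (hu : ∀ q, u ≠ B.T q) :
    up (B.N t u) = B.N (zipBW snoc (up t) u) (up u) := by
  cases t with
  | T p => exact absurd rfl (ht p)
  | N a b =>
    cases u with
    | T q => exact absurd rfl (hu q)
    | N c d => rfl

lemma ch_zero {α : Type} (xs : List α) : ch 0 xs = B.T [] := by
  cases xs <;> rfl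

lemma ch_cons {α : Type} (x : α) (xs' : List α) (k' : ℕ)
    (h : ¬ (k' + 1 = (x :: xs').length)) :
    ch (k' + 1) (x :: xs') = B.N (mapB (x :: ·) (ch k' xs')) (ch (k' + 1) xs') := by
  rw [ch, if_neg h]

lemma ch_top {α : Type} (xs : List α) (k : ℕ) (h : k + 1 = xs.length) :
    ch (k + 1) xs = B.T xs := by
  rw [ch.eq_def]; simp [h]

lemma ch_ne_T {α : Type} (xs : List α) (k : ℕ) (h1 : 1 ≤ k) (h2 : k < xs.length) :
    ∀ p, ch k xs ≠ B.T p := by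
  obtain ⟨k', rfl⟩ : ∃ k', k = k' + 1 := ⟨k - 1, by omega⟩
  cases xs with
  | nil => simp at h2
  | cons x xs' =>
    rw [ch_cons x xs' k' (by omega)]
    intro p hp
    simp at hp

lemma ch1_tips {α : Type} (xs : List α) (h : 1 ≤ xs.length) :
    tipsP (fun ys => ∃ y, ys = [y]) (ch 1 xs) := by
  induction xs with
  | nil => simp at h
  | cons x xs' IH =>
    by_cases h1 : 1 = (x :: xs').length
    · have hx : xs' = [] := by
        have : xs'.length = 0 := by simp only [List.length_cons] at h1; omega
        exact List.length_eq_zero_iff.mp this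
      subst hx
      rw [show (1 : ℕ) = 0 + 1 from rfl, ch_top _ _ (by simp)]
      rw [tipsP_T]
      exact ⟨x, rfl⟩
    · rw [show (1 : ℕ) = 0 + 1 from rfl, ch_cons x xs' 0 h1]
      have hlen : 1 ≤ xs'.length := by simp only [List.length_cons] at h1; omega
      rw [tipsP_N]
      constructor
      · rw [ch_zero, show mapB (x :: ·) (B.T ([] : List α)) = B.T [x] from rfl, tipsP_T]
        exact ⟨x, rfl⟩
      · exact IH hlen

lemma key {α γ : Type} [Inhabited γ] :
    ∀ (xs : List α) (k : ℕ) (f : List α → γ), 1 ≤ k → k + 1 ≤ xs.length →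
    up (mapB f (ch k xs)) = mapB (fun ys => (subs ys).map f) (ch (k + 1) xs) := by
  intro xs
  induction xs with
  | nil => intro k f hk hlen; simp at hlen
  | cons x xs' IH =>
    intro k f hk hlen
    obtain ⟨k', rfl⟩ : ∃ k', k = k' + 1 := ⟨k - 1, by omega⟩
    simp only [List.length_cons] at hlen
    have hne : ¬ (k' + 1 = (x :: xs').length) := by
      simp only [List.length_cons]; omega
    rw [ch_cons x xs' k' hne]
    by_cases hEq : k' + 1 = xs'.length
    · -- top case: right subtree is a tip
      rw [ch_top xs' k' hEq, ch_top (x :: xs') (k' + 1) (by simp [← hEq])]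
      cases k' with
      | zero =>
        obtain ⟨y, rfl⟩ := List.length_eq_one_iff.mp hEq.symm
        rw [ch_zero]
        show up (B.N (mapB f (mapB (x :: ·) (B.T []))) (B.T (f [y]))) = _
        simp [mapB, up, subs]
      | succ k'' =>
        have hne' : ∀ p, ch (k'' + 1) xs' ≠ B.T p :=
          ch_ne_T xs' (k'' + 1) (by omega) (by omega)
        simp only [mapB, mapB_mapB]
        rw [up_N_T _ (mapB_ne_T hne') _]
        rw [IH (k'' + 1) (fun ys => f (x :: ys)) (by omega) (by omega)]
        rw [ch_top xs' (k'' + 1) hEq]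
        simp [mapB, unT, subs, List.map_append, Function.comp]
    · -- k' + 1 < xs'.length
      have hlt : k' + 1 < xs'.length := by omega
      rw [ch_cons x xs' (k' + 1) (by simp only [List.length_cons]; omega)]
      have hneC : ∀ q, ch (k' + 1) xs' ≠ B.T q := ch_ne_T xs' (k' + 1) (by omega) hlt
      cases k' with
      | zero =>
        rw [ch_zero]
        simp only [mapB]
        rw [up_T_N _ _ (mapB_ne_T hneC)]
        rw [IH 1 f (by omega) (by omega)]
        congr 1
        rw [mapB_mapB, mapB_mapB]
        refine mapB_congrP (ch1_tips xs' (by omega)) ?_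
        rintro a ⟨y, rfl⟩
        simp [subs]
      | succ k'' =>
        have hne' : ∀ p, ch (k'' + 1) xs' ≠ B.T p :=
          ch_ne_T xs' (k'' + 1) (by omega) (by omega)
        simp only [mapB, mapB_mapB]
        rw [up_N_N _ _ (mapB_ne_T hne') (mapB_ne_T hneC)]
        rw [IH (k'' + 1) (fun ys => f (x :: ys)) (by omega) (by omega)]
        rw [IH (k'' + 1 + 1) f (by omega) (by omega)]
        rw [zipBW_mapB]
        congr 1
        refine mapB_congr (fun ys => ?_) _
        simp [subs, snoc, List.map_append, Function.comp]

theorem stmt1 {Y : Type} [Inhabited Y] (g : List Y → Y)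
    (n : ℕ) (xs : List Y) (h : n + 1 ≤ xs.length) :
    mapB (td' g n) (ch (n + 1) xs) = (mapB g ∘ up)^[n] (mapB ex (ch 1 xs)) := by
  induction n with
  | zero => exact mapB_congr (fun a => rfl) _
  | succ n IH =>
    rw [Function.iterate_succ_apply', ← IH (by omega)]
    simp only [Function.comp_apply]
    rw [key xs (n + 1) (td' g n) (by omega) h, mapB_mapB]
    exact mapB_congr (fun a => rfl) _
end

section
/- Let X and Y be inhabited types, f : X → Y and g : List Y → Y. For every n : ℕ and every list xs : List X with length xs = n + 1, td n xs = td' n (List.map f xs). -/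
lemma subs_map {α β : Type} (f : α → β) (xs : List α) :
    subs (xs.map f) = (subs xs).map (List.map f) := by
  induction xs with
  | nil => simp [subs]
  | cons x xs ih =>
    simp [subs, ih, List.map_map]

lemma mem_subs_length {α : Type} (xs : List α) (ys : List α) (hy : ys ∈ subs xs) :
    ys.length + 1 = xs.length := by
  induction xs generalizing ys with
  | nil => simp [subs] at hy
  | cons x xs ih =>
    simp [subs] at hy
    rcases hy with ⟨a, ha, rfl⟩ | rfl
    · simpa using ih a ha
    · simp

theorem stmt3 {X Y : Type} [Inhabited X] [Inhabited Y] (f : X → Y) (g : List Y → Y)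
    (n : ℕ) (xs : List X) (h : xs.length = n + 1) :
    td f g n xs = td' g n (List.map f xs) := by
  induction n generalizing xs with
  | zero =>
    match xs, h with
    | [x], _ => simp [td, td', ex]
  | succ n ih =>
    simp only [td, td', subs_map, List.map_map]
    congr 1
    apply List.map_congr_left
    intro ys hys
    have := mem_subs_length xs ys hys
    exact ih ys (by omega)
end
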